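/- Let μ be a probability measure with Gaussian-like tails relative to q₀ (as above), and let q̂₀ be a Gaussian mixture density with uniformly bounded means and eigenvalue-bounded covariances. Then the log-density ratio x ↦ log(q̂₀(x)/q₀(x)) belongs to the Orlicz class L^{φ_1}(Q₀) (where Q₀ has density q₀), with ‖log(q̂₀/q₀)‖_{φ_1} bounded by a constant depending only on d, c_μ, λ̲, λ̄, c̲, c̄, s̲, s̄ — uniformly over all such mixtures. -/

import Mathlib

/-!
Every mixture component `N(μ, Ω)` with `λ̲ ≤ Ω ≤ λ̄` and `‖μ‖ ≤ c_μ` lies, pointwise, between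
`C₁ exp(-(‖x‖² + c_μ²)/λ̲)` and `C₂`, where `C₁ = (2πλ̄)^(-d/2)` and `C₂ = (2πλ̲)^(-d/2)`: this only
uses `λ̲^d ≤ det Ω ≤ λ̄^d` and `0 ≤ yᵀΩ⁻¹y ≤ ‖y‖²/λ̲`. So does any convex combination of them. Together with
the Gaussian-type bounds on `q₀` this gives `|log(q̂₀/q₀)(x)| ≤ A + B‖x‖²` with `A`, `B`
independent of the mixture. Since `q₀ ≤ c̄ exp(-‖x‖²/(2s̄²))`, the function `exp((A + B‖x‖²)/c₀)`
is `Q₀`-integrable for `c₀ = 4Bs̄²`, and dominated convergence as `c → ∞` yields a single `c`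
with `∫ exp((A + B‖x‖²)/c) dQ₀ ≤ 2`, which then bounds every Luxemburg norm.
-/

open MeasureTheory Matrix

/-- The multivariate Gaussian density with mean `μ` and covariance `Ω` on `n → ℝ`. -/
noncomputable def gaussDensity {n : Type*} [Fintype n] [DecidableEq n]
    (μ : n → ℝ) (Ω : Matrix n n ℝ) (x : n → ℝ) : ℝ :=
  (Real.sqrt ((2 * Real.pi) ^ (Fintype.card n) * Ω.det))⁻¹ *
    Real.exp (-(1 / 2) * ((x - μ) ⬝ᵥ (Ω⁻¹ *ᵥ (x - μ))))

/-- The `φ_1`-Luxemburg norm with threshold 2, via the lower integral. -/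
noncomputable def luxE {X : Type*} [MeasurableSpace X] (μ : Measure X) (f : X → ℝ) : ℝ :=
  sInf {c : ℝ | 0 < c ∧ ∫⁻ x, ENNReal.ofReal (Real.exp (|f x| / c)) ∂μ ≤ 2}

open Filter Topology
open scoped ENNReal

namespace Matrix

lemma dotProduct_self_eq_sum_sq {n : Type*} [Fintype n] (v : n → ℝ) : v ⬝ᵥ v = ∑ i, v i ^ 2 := by
  simp [dotProduct, sq]

variable {n : Type*} [DecidableEq n] {A : Matrix n n ℝ} {a b : ℝ}

lemma PosSemidef.isHermitian_of_sub_smul_one (h : (A - a • 1).PosSemidef) : A.IsHermitian := by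
  simpa using h.isHermitian.add (isHermitian_one.smul (IsSelfAdjoint.all a))

lemma PosSemidef.posDef_of_sub_smul_one (h : (A - a • 1).PosSemidef) (ha : 0 < a) :
    A.PosDef := by
  simpa using PosDef.posSemidef_add h (PosDef.one.smul ha)

variable [Fintype n]

lemma PosSemidef.mul_dotProduct_self_le (h : (A - a • 1).PosSemidef) (x : n → ℝ) :
    a * (x ⬝ᵥ x) ≤ x ⬝ᵥ A *ᵥ x := by
  have := h.dotProduct_mulVec_nonneg x
  simp only [star_trivial, sub_mulVec, dotProduct_sub, smul_mulVec, one_mulVec,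
    dotProduct_smul, smul_eq_mul] at this
  linarith

lemma PosSemidef.dotProduct_mulVec_le (h : (b • 1 - A).PosSemidef) (x : n → ℝ) :
    x ⬝ᵥ A *ᵥ x ≤ b * (x ⬝ᵥ x) := by
  have := h.dotProduct_mulVec_nonneg x
  simp only [star_trivial, sub_mulVec, dotProduct_sub, smul_mulVec, one_mulVec,
    dotProduct_smul, smul_eq_mul] at this
  linarith

lemma IsHermitian.eigenvalues_eq_dotProduct (hA : A.IsHermitian) (i : n) :
    hA.eigenvalues i = (hA.eigenvectorBasis i).ofLp ⬝ᵥ A *ᵥ (hA.eigenvectorBasis i).ofLp := by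
  simpa using hA.eigenvalues_eq i

lemma IsHermitian.eigenvectorBasis_dotProduct_self (hA : A.IsHermitian) (i : n) :
    (hA.eigenvectorBasis i).ofLp ⬝ᵥ (hA.eigenvectorBasis i).ofLp = 1 := by
  have h := real_inner_self_eq_norm_sq (hA.eigenvectorBasis i)
  rw [hA.eigenvectorBasis.orthonormal.1 i, EuclideanSpace.inner_eq_star_dotProduct] at h
  simpa using h

lemma IsHermitian.le_eigenvalues (hA : A.IsHermitian) (h : (A - a • 1).PosSemidef) (i : n) :
    a ≤ hA.eigenvalues i := by
  simpa [hA.eigenvalues_eq_dotProduct, hA.eigenvectorBasis_dotProduct_self] using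
    h.mul_dotProduct_self_le (hA.eigenvectorBasis i).ofLp

lemma IsHermitian.eigenvalues_le (hA : A.IsHermitian) (h : (b • 1 - A).PosSemidef) (i : n) :
    hA.eigenvalues i ≤ b := by
  simpa [hA.eigenvalues_eq_dotProduct, hA.eigenvectorBasis_dotProduct_self] using
    h.dotProduct_mulVec_le (hA.eigenvectorBasis i).ofLp

lemma PosSemidef.pow_card_le_det (h : (A - a • 1).PosSemidef) (ha : 0 ≤ a) :
    a ^ Fintype.card n ≤ A.det := by
  have hA := h.isHermitian_of_sub_smul_one
  rw [hA.det_eq_prod_eigenvalues, ← Finset.card_univ, ← Finset.prod_const]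
  exact Finset.prod_le_prod (fun _ _ => ha) fun i _ => hA.le_eigenvalues h i

lemma PosSemidef.det_le_pow_card (hlo : (A - a • 1).PosSemidef) (ha : 0 ≤ a)
    (hhi : (b • 1 - A).PosSemidef) : A.det ≤ b ^ Fintype.card n := by
  have hA := hlo.isHermitian_of_sub_smul_one
  rw [hA.det_eq_prod_eigenvalues, ← Finset.card_univ, ← Finset.prod_const]
  exact Finset.prod_le_prod (fun i _ => ha.trans (hA.le_eigenvalues hlo i))
    fun i _ => hA.eigenvalues_le hhi i

lemma PosSemidef.dotProduct_inv_mulVec_le (h : (A - a • 1).PosSemidef) (ha : 0 < a)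
    (y : n → ℝ) : y ⬝ᵥ A⁻¹ *ᵥ y ≤ (y ⬝ᵥ y) / a := by
  have hA := h.posDef_of_sub_smul_one ha
  set z := A⁻¹ *ᵥ y
  have hz : A *ᵥ z = y := by
    simp [z, mulVec_mulVec, mul_nonsing_inv _ ((isUnit_iff_isUnit_det _).1 hA.isUnit)]
  have hq : y ⬝ᵥ z = z ⬝ᵥ A *ᵥ z := by rw [hz, dotProduct_comm]
  have hlo : a * (z ⬝ᵥ z) ≤ y ⬝ᵥ z := hq ▸ h.mul_dotProduct_self_le z
  have hcs : (y ⬝ᵥ z) ^ 2 ≤ (y ⬝ᵥ y) * (z ⬝ᵥ z) := by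
    simpa [dotProduct, sq] using Finset.sum_mul_sq_le_sq_mul_sq Finset.univ y z
  have hy : 0 ≤ y ⬝ᵥ y := by simpa using dotProduct_self_star_nonneg y
  rw [le_div_iff₀ ha]
  rcases le_or_gt (y ⬝ᵥ z) 0 with hq0 | hq0
  · nlinarith
  · nlinarith [mul_le_mul_of_nonneg_left hlo hy, mul_le_mul_of_nonneg_left hcs ha.le]

end Matrix

section Gaussian

variable {n : Type*} [Fintype n] [DecidableEq n] {Ω : Matrix n n ℝ} {a b : ℝ}

lemma gaussDensity_le (h : (Ω - a • 1).PosSemidef) (ha : 0 < a) (μ x : n → ℝ) :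
    gaussDensity μ Ω x ≤ (Real.sqrt ((2 * Real.pi) ^ Fintype.card n * a ^ Fintype.card n))⁻¹ := by
  have hdet := h.pow_card_le_det ha.le
  have hquad : 0 ≤ (x - μ) ⬝ᵥ Ω⁻¹ *ᵥ (x - μ) := by
    simpa using (h.posDef_of_sub_smul_one ha).posSemidef.inv.dotProduct_mulVec_nonneg (x - μ)
  refine (mul_le_of_le_one_right (by positivity) (Real.exp_le_one_iff.2 (by linarith))).trans ?_
  gcongr

lemma le_gaussDensity (hlo : (Ω - a • 1).PosSemidef) (ha : 0 < a) (hhi : (b • 1 - Ω).PosSemidef)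
    (μ x : n → ℝ) :
    (Real.sqrt ((2 * Real.pi) ^ Fintype.card n * b ^ Fintype.card n))⁻¹ *
      Real.exp (-((x - μ) ⬝ᵥ (x - μ)) / (2 * a)) ≤ gaussDensity μ Ω x := by
  have hdet := hlo.det_le_pow_card ha.le hhi
  have hdet_pos : 0 < Ω.det := (hlo.posDef_of_sub_smul_one ha).det_pos
  have hquad := hlo.dotProduct_inv_mulVec_le ha (x - μ)
  unfold gaussDensity
  gcongr
  rw [show -((x - μ) ⬝ᵥ (x - μ)) / (2 * a) = -(1 / 2) * ((x - μ) ⬝ᵥ (x - μ) / a) by ring]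
  linarith

end Gaussian

lemma sum_sub_sq_le {ι : Type*} (s : Finset ι) (x y : ι → ℝ) :
    ∑ i ∈ s, (x i - y i) ^ 2 ≤ 2 * ∑ i ∈ s, x i ^ 2 + 2 * ∑ i ∈ s, y i ^ 2 := by
  rw [Finset.mul_sum, Finset.mul_sum, ← Finset.sum_add_distrib]
  exact Finset.sum_le_sum fun i _ => by nlinarith [sq_nonneg (x i + y i)]

lemma gaussMixture_mem_Icc {n ι : Type*} [Fintype n] [DecidableEq n] [Fintype ι]
    {w : ι → ℝ} {μv : ι → n → ℝ} {Ω : ι → Matrix n n ℝ} {a b m : ℝ} (ha : 0 < a)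
    (hw : ∀ k, 0 ≤ w k) (hw1 : ∑ k, w k = 1) (hμ : ∀ k, ∑ i, μv k i ^ 2 ≤ m)
    (hΩ : ∀ k, (Ω k - a • 1).PosSemidef ∧ (b • 1 - Ω k).PosSemidef) (x : n → ℝ) :
    ∑ k, w k * gaussDensity (μv k) (Ω k) x ∈ Set.Icc
      ((Real.sqrt ((2 * Real.pi) ^ Fintype.card n * b ^ Fintype.card n))⁻¹ *
        Real.exp (-(∑ i, x i ^ 2 + m) / a))
      (Real.sqrt ((2 * Real.pi) ^ Fintype.card n * a ^ Fintype.card n))⁻¹ := by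
  refine (convex_Icc _ _).sum_mem (fun k _ => hw k) hw1 fun k _ => ⟨?_, ?_⟩
  · refine le_trans ?_ (le_gaussDensity (hΩ k).1 ha (hΩ k).2 (μv k) x)
    have hdist := sum_sub_sq_le Finset.univ x (μv k)
    rw [dotProduct_self_eq_sum_sq]
    refine mul_le_mul_of_nonneg_left (Real.exp_le_exp.2 ?_) (by positivity)
    rw [neg_div, neg_div, neg_le_neg_iff, div_le_div_iff₀ (by positivity) ha]
    simp only [Pi.sub_apply]
    nlinarith [hμ k]
  · exact gaussDensity_le (hΩ k).1 ha (μv k) x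

lemma abs_log_div_le_of_bounds {M q Ca Cb clo chi s m a slo shi : ℝ} (hCb : 0 < Cb)
    (hclo : 0 < clo) (ha : 0 ≤ a) (hs : 0 ≤ s)
    (hM : M ∈ Set.Icc (Cb * Real.exp (-(s + m) / a)) Ca)
    (hq : clo * Real.exp (-s / (2 * slo ^ 2)) ≤ q ∧ q ≤ chi * Real.exp (-s / (2 * shi ^ 2))) :
    |Real.log (M / q)| ≤
      |Real.log Ca - Real.log clo| + |Real.log Cb - Real.log chi - m / a| +
        (1 / (2 * slo ^ 2) + 1 / a) * s := by
  have hM0 : 0 < M := lt_of_lt_of_le (by positivity) hM.1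
  have hq0 : 0 < q := lt_of_lt_of_le (by positivity) hq.1
  have hchi : 0 < chi := pos_of_mul_pos_left (hq0.trans_le hq.2) (Real.exp_pos _).le
  have hlog_mul_exp : ∀ {C t : ℝ}, 0 < C → Real.log (C * Real.exp t) = Real.log C + t :=
    fun hC => by rw [Real.log_mul hC.ne' (Real.exp_pos _).ne', Real.log_exp]
  have hMlo := hlog_mul_exp hCb ▸ Real.log_le_log (by positivity) hM.1
  have hMhi := Real.log_le_log hM0 hM.2
  have hqlo := hlog_mul_exp hclo ▸ Real.log_le_log (by positivity) hq.1
  have hqhi := hlog_mul_exp hchi ▸ Real.log_le_log hq0 hq.2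
  have hslo : 0 ≤ s / (2 * slo ^ 2) := by positivity
  have hshi : 0 ≤ s / (2 * shi ^ 2) := by positivity
  have hsa : 0 ≤ s / a := by positivity
  have hupper := le_abs_self (Real.log Ca - Real.log clo)
  have hupper₀ := abs_nonneg (Real.log Ca - Real.log clo)
  have hlower := neg_abs_le (Real.log Cb - Real.log chi - m / a)
  have hlower₀ := abs_nonneg (Real.log Cb - Real.log chi - m / a)
  rw [Real.log_div hM0.ne' hq0.ne', abs_le]
  constructor <;> ring_nf at * <;> linarith

lemma lintegral_exp_neg_mul_sum_sq_lt_top {ι : Type*} [Fintype ι] {c : ℝ} (hc : 0 < c) :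
    ∫⁻ x : ι → ℝ, ENNReal.ofReal (Real.exp (-c * ∑ i, x i ^ 2)) < ∞ := by
  have h := Integrable.fintype_prod (μ := fun _ : ι => volume)
    (f := fun _ t => Real.exp (-c * t ^ 2)) fun _ => integrable_exp_neg_mul_sq hc
  simp only [← Real.exp_sum, ← Finset.mul_sum, ← volume_pi] at h
  exact h.lintegral_lt_top

lemma lintegral_exp_add_mul_sum_sq_lt_top {ι : Type*} [Fintype ι] {q₀ : (ι → ℝ) → ℝ}
    (hq₀ : Measurable q₀) {chi s a b : ℝ}
    (htail : ∀ x, q₀ x ≤ chi * Real.exp (-(∑ i, x i ^ 2) / (2 * s ^ 2)))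
    (hb : b < 1 / (2 * s ^ 2)) :
    ∫⁻ x, ENNReal.ofReal (Real.exp (a + b * ∑ i, x i ^ 2))
      ∂(volume.withDensity fun x => ENNReal.ofReal (q₀ x)) < ∞ := by
  refine (lintegral_withDensity_le_lintegral_mul _ hq₀.ennreal_ofReal _).trans_lt ?_
  have hbound : ∀ x : ι → ℝ, ENNReal.ofReal (q₀ x) * ENNReal.ofReal (Real.exp (a + b * ∑ i, x i ^ 2))
      ≤ ENNReal.ofReal (chi * Real.exp a) *
        ENNReal.ofReal (Real.exp (-(1 / (2 * s ^ 2) - b) * ∑ i, x i ^ 2)) := by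
    intro x
    rw [← ENNReal.ofReal_mul' (Real.exp_pos _).le, ← ENNReal.ofReal_mul' (Real.exp_pos _).le]
    refine ENNReal.ofReal_le_ofReal ?_
    calc q₀ x * Real.exp (a + b * ∑ i, x i ^ 2)
        ≤ chi * Real.exp (-(∑ i, x i ^ 2) / (2 * s ^ 2)) * Real.exp (a + b * ∑ i, x i ^ 2) := by
          gcongr; exact htail x
      _ = chi * Real.exp a * Real.exp (-(1 / (2 * s ^ 2) - b) * ∑ i, x i ^ 2) := by
          rw [mul_assoc, mul_assoc, ← Real.exp_add, ← Real.exp_add]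
          ring_nf
  refine (lintegral_mono hbound).trans_lt ?_
  rw [lintegral_const_mul' _ _ ENNReal.ofReal_ne_top]
  exact ENNReal.mul_lt_top ENNReal.ofReal_lt_top
    (lintegral_exp_neg_mul_sum_sq_lt_top (by linarith))

section Orlicz

variable {X : Type*} [MeasurableSpace X] {ν : Measure X}

lemma luxE_le {f : X → ℝ} {c : ℝ} (hc : 0 < c)
    (h : ∫⁻ x, ENNReal.ofReal (Real.exp (|f x| / c)) ∂ν ≤ 2) : luxE ν f ≤ c :=
  csInf_le ⟨0, fun _ hc' => hc'.1.le⟩ ⟨hc, h⟩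

lemma lintegral_exp_abs_div_le_of_abs_le {f g : X → ℝ} (hfg : ∀ x, |f x| ≤ g x) {c : ℝ}
    (hc : 0 < c) :
    ∫⁻ x, ENNReal.ofReal (Real.exp (|f x| / c)) ∂ν ≤
      ∫⁻ x, ENNReal.ofReal (Real.exp (g x / c)) ∂ν :=
  lintegral_mono fun x => ENNReal.ofReal_le_ofReal <| Real.exp_le_exp.2 <|
    div_le_div_of_nonneg_right (hfg x) hc.le

lemma exists_lintegral_exp_div_le_two [IsProbabilityMeasure ν] {f : X → ℝ} (hf : Measurable f)
    (hf0 : ∀ x, 0 ≤ f x) {c₀ : ℝ} (hc₀ : 0 < c₀)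
    (hfin : ∫⁻ x, ENNReal.ofReal (Real.exp (f x / c₀)) ∂ν ≠ ∞) :
    ∃ c, 0 < c ∧ ∫⁻ x, ENNReal.ofReal (Real.exp (f x / c)) ∂ν ≤ 2 := by
  set c : ℕ → ℝ := fun k => c₀ * (k + 1)
  have hc_pos : ∀ k, 0 < c k := fun k => by positivity
  have hc_top : Tendsto c atTop atTop :=
    (tendsto_atTop_add_const_right _ 1 tendsto_natCast_atTop_atTop).const_mul_atTop hc₀
  have hlim : Tendsto (fun k => ∫⁻ x, ENNReal.ofReal (Real.exp (f x / c k)) ∂ν) atTop (𝓝 1) := by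
    rw [← measure_univ (μ := ν), ← lintegral_one]
    refine tendsto_lintegral_of_dominated_convergence _
      (fun k => (hf.div_const _).exp.ennreal_ofReal) (fun k => ae_of_all _ fun x => ?_) hfin
      (ae_of_all _ fun x => ?_)
    · refine ENNReal.ofReal_le_ofReal (Real.exp_le_exp.2 ?_)
      exact div_le_div_of_nonneg_left (hf0 x) hc₀ (le_mul_of_one_le_right hc₀.le (by simp))
    · simpa [Function.comp_def] using (ENNReal.continuous_ofReal.tendsto _).comp
        ((Real.continuous_exp.tendsto 0).comp (tendsto_const_nhds.div_atTop hc_top))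
  obtain ⟨k, hk⟩ := (hlim.eventually_le_const (by norm_num : (1 : ℝ≥0∞) < 2)).exists
  exact ⟨c k, hc_pos k, hk⟩

end Orlicz

theorem stmt18_general (d : ℕ)
    (q₀ : (Fin d → ℝ) → ℝ) (hq₀m : Measurable q₀)
    (clo chi slo shi cμ lamlo lamhi : ℝ)
    (hclo : 0 < clo) (hshi : 0 < shi)
    (hlamlo : 0 < lamlo) (hlamhi : 0 < lamhi)
    (htail : ∀ x : Fin d → ℝ,
      clo * Real.exp (-(∑ i, x i ^ 2) / (2 * slo ^ 2)) ≤ q₀ x ∧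
      q₀ x ≤ chi * Real.exp (-(∑ i, x i ^ 2) / (2 * shi ^ 2)))
    (hprob : IsProbabilityMeasure
      ((volume : Measure (Fin d → ℝ)).withDensity fun x => ENNReal.ofReal (q₀ x))) :
    ∃ B : ℝ, 0 < B ∧
      ∀ (K : ℕ), 0 < K →
      ∀ (w : Fin K → ℝ) (μv : Fin K → Fin d → ℝ)
        (Ω : Fin K → Matrix (Fin d) (Fin d) ℝ),
        (∀ k, 0 ≤ w k) → (∑ k, w k = 1) →
        (∀ k, (∑ i, μv k i ^ 2) ≤ cμ ^ 2) →
        (∀ k, (Ω k - lamlo • (1 : Matrix (Fin d) (Fin d) ℝ)).PosSemidef ∧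
          (lamhi • (1 : Matrix (Fin d) (Fin d) ℝ) - Ω k).PosSemidef) →
        (∃ c : ℝ, 0 < c ∧
          ∫⁻ x, ENNReal.ofReal (Real.exp
              (|Real.log ((∑ k, w k * gaussDensity (μv k) (Ω k) x) / q₀ x)| / c))
            ∂((volume : Measure (Fin d → ℝ)).withDensity fun x => ENNReal.ofReal (q₀ x))
            ≤ 2) ∧
        luxE ((volume : Measure (Fin d → ℝ)).withDensity fun x => ENNReal.ofReal (q₀ x))
          (fun x => Real.log ((∑ k, w k * gaussDensity (μv k) (Ω k) x) / q₀ x)) ≤ B := by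
  set Ca := (Real.sqrt ((2 * Real.pi) ^ d * lamlo ^ d))⁻¹
  set Cb := (Real.sqrt ((2 * Real.pi) ^ d * lamhi ^ d))⁻¹
  set A := |Real.log Ca - Real.log clo| + |Real.log Cb - Real.log chi - cμ ^ 2 / lamlo|
  set B := 1 / (2 * slo ^ 2) + 1 / lamlo
  have hB : 0 < B := by positivity
  set c₀ := 4 * B * shi ^ 2
  have hfin : ∫⁻ x, ENNReal.ofReal (Real.exp ((A + B * ∑ i, x i ^ 2) / c₀))
      ∂(volume.withDensity fun x => ENNReal.ofReal (q₀ x)) ≠ ∞ := by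
    have h := lintegral_exp_add_mul_sum_sq_lt_top hq₀m (fun x => (htail x).2) (a := A / c₀)
      (show 1 / (4 * shi ^ 2) < 1 / (2 * shi ^ 2) by gcongr; linarith)
    convert h.ne using 6
    field_simp [c₀]
    ring
  obtain ⟨c, hc, hc2⟩ := exists_lintegral_exp_div_le_two (by fun_prop)
    (fun x => by positivity) (by positivity) hfin
  refine ⟨c, hc, fun K _ w μv Ω hw hw1 hμ hΩ => ?_⟩
  have hbound : ∀ x, |Real.log ((∑ k, w k * gaussDensity (μv k) (Ω k) x) / q₀ x)| ≤
      A + B * ∑ i, x i ^ 2 := fun x =>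
    abs_log_div_le_of_bounds (by positivity) hclo hlamlo.le (by positivity)
      (by simpa using gaussMixture_mem_Icc hlamlo hw hw1 hμ hΩ x) (htail x)
  have hle := (lintegral_exp_abs_div_le_of_abs_le hbound hc).trans hc2
  exact ⟨⟨c, hc, hle⟩, luxE_le hc hle⟩

/-- Uniform Orlicz bound for log-density ratios of Gaussian mixtures relative to a
probability measure `Q₀` with Gaussian-like tails: there is a single constant `B`,
depending only on the tail and eigenvalue constants, such that for every Gaussian
mixture with uniformly bounded means and eigenvalue-bounded covariances the log-density
ratio `log(q̂₀/q₀)` lies in `L^{φ_1}(Q₀)` with `‖log(q̂₀/q₀)‖_{φ_1} ≤ B`. -/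
theorem stmt18 (d : ℕ) (hd : 0 < d)
    (q₀ : (Fin d → ℝ) → ℝ) (hq₀m : Measurable q₀)
    (clo chi slo shi cμ lamlo lamhi : ℝ)
    (hclo : 0 < clo) (hchi : 0 < chi) (hslo : 0 < slo) (hshi : 0 < shi)
    (hcμ : 0 ≤ cμ) (hlamlo : 0 < lamlo) (hlamhi : 0 < lamhi)
    (htail : ∀ x : Fin d → ℝ,
      clo * Real.exp (-(∑ i, x i ^ 2) / (2 * slo ^ 2)) ≤ q₀ x ∧
      q₀ x ≤ chi * Real.exp (-(∑ i, x i ^ 2) / (2 * shi ^ 2)))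
    (hprob : IsProbabilityMeasure
      ((volume : Measure (Fin d → ℝ)).withDensity fun x => ENNReal.ofReal (q₀ x))) :
    ∃ B : ℝ, 0 < B ∧
      ∀ (K : ℕ), 0 < K →
      ∀ (w : Fin K → ℝ) (μv : Fin K → Fin d → ℝ)
        (Ω : Fin K → Matrix (Fin d) (Fin d) ℝ),
        (∀ k, 0 ≤ w k) → (∑ k, w k = 1) →
        (∀ k, (∑ i, μv k i ^ 2) ≤ cμ ^ 2) →
        (∀ k, (Ω k - lamlo • (1 : Matrix (Fin d) (Fin d) ℝ)).PosSemidef ∧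
          (lamhi • (1 : Matrix (Fin d) (Fin d) ℝ) - Ω k).PosSemidef) →
        (∃ c : ℝ, 0 < c ∧
          ∫⁻ x, ENNReal.ofReal (Real.exp
              (|Real.log ((∑ k, w k * gaussDensity (μv k) (Ω k) x) / q₀ x)| / c))
            ∂((volume : Measure (Fin d → ℝ)).withDensity fun x => ENNReal.ofReal (q₀ x))
            ≤ 2) ∧
        luxE ((volume : Measure (Fin d → ℝ)).withDensity fun x => ENNReal.ofReal (q₀ x))
          (fun x => Real.log ((∑ k, w k * gaussDensity (μv k) (Ω k) x) / q₀ x)) ≤ B :=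
  stmt18_general d q₀ hq₀m clo chi slo shi cμ lamlo lamhi hclo hshi hlamlo hlamhi htail hprob
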